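/- arXiv:1711.10775 — 4 statements merged into one kernel-verified Lean document; each statement's English description precedes it below -/
import Mathlib

section
/- Assume that for every mismatched iteration t ∈ T_n one has ∥x^t − u_{k_t}∥² − ∥x^t − u_{k*_t}∥² ≤ β. Then the cumulative weighted losses satisfy Σ_{t=1}^T (1/n_t)·((1 − 1/n_t)·ℓ_Z^t − ℓ_U^t − ∥x^t∥² − ∥u_{k_t}∥²) − β·Σ_{t∈T_n} (1/n_t) ≤ ∥Z^1 − U∥_F². -/
open Finset

/-- Squared Frobenius norm of a `d × K` real matrix, viewed through its columns
in `EuclideanSpace ℝ (Fin d)`. -/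
noncomputable def frobSq {d K : ℕ} (A : Fin K → EuclideanSpace ℝ (Fin d)) : ℝ :=
  ∑ k, ‖A k‖ ^ 2

lemma step_eq {E : Type*} [NormedAddCommGroup E] [InnerProductSpace ℝ E]
    (η : ℝ) (a z u : E) :
    ‖z + η • (a - z) - u‖ ^ 2 =
      ‖z - u‖ ^ 2 - η * ((1 - η) * ‖a - z‖ ^ 2 - ‖a - u‖ ^ 2 + ‖z - u‖ ^ 2) := by
  have h1 : z + η • (a - z) - u = (z - u) + η • (a - z) := add_sub_right_comm z _ u
  have h2 : a - u = (a - z) + (z - u) := by abel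
  rw [h1, norm_add_sq_real, h2, norm_add_sq_real, norm_smul, inner_smul_right,
    real_inner_comm (z - u) (a - z), Real.norm_eq_abs, mul_pow, sq_abs]
  ring

lemma tele (Φ : ℕ → ℝ) : ∀ N : ℕ, ∑ t ∈ Icc 1 N, (Φ t - Φ (t + 1)) = Φ 1 - Φ (N + 1)
  | 0 => by simp
  | N + 1 => by
    rw [Finset.sum_Icc_succ_top (Nat.le_add_left 1 N), tele Φ N]
    ring

theorem online_pq_lemma1 (d K T : ℕ) (hd : 1 ≤ d) (hK : 1 ≤ K) (hT : 1 ≤ T)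
    (x : ℕ → EuclideanSpace ℝ (Fin d))
    (Z : ℕ → Fin K → EuclideanSpace ℝ (Fin d))
    (kk : ℕ → Fin K)
    (hnear : ∀ t ∈ Icc 1 T, ∀ j, ‖x t - Z t (kk t)‖ ≤ ‖x t - Z t j‖)
    (n : ℕ → ℝ) (hn : ∀ t ∈ Icc 1 T, 1 ≤ n t)
    (hupd : ∀ t ∈ Icc 1 T,
      Z (t + 1) (kk t) = Z t (kk t) + (n t)⁻¹ • (x t - Z t (kk t)) ∧
      ∀ j, j ≠ kk t → Z (t + 1) j = Z t j)
    (U : Fin K → EuclideanSpace ℝ (Fin d))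
    (kstar : ℕ → Fin K)
    (hstar : ∀ t ∈ Icc 1 T, ∀ j, ‖x t - U (kstar t)‖ ≤ ‖x t - U j‖)
    (β : ℝ)
    (hβ : ∀ t ∈ (Icc 1 T).filter (fun t => kk t ≠ kstar t),
      ‖x t - U (kk t)‖ ^ 2 - ‖x t - U (kstar t)‖ ^ 2 ≤ β) :
    ∑ t ∈ Icc 1 T, (n t)⁻¹ *
        ((1 - (n t)⁻¹) * ‖x t - Z t (kk t)‖ ^ 2 - ‖x t - U (kstar t)‖ ^ 2
          - ‖x t‖ ^ 2 - ‖U (kk t)‖ ^ 2)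
      - β * ∑ t ∈ (Icc 1 T).filter (fun t => kk t ≠ kstar t), (n t)⁻¹
      ≤ frobSq (fun k => Z 1 k - U k) := by
  set Φ : ℕ → ℝ := fun t => frobSq (fun k => Z t k - U k) with hΦ
  have hstep : ∀ t ∈ Icc 1 T,
      (n t)⁻¹ * ((1 - (n t)⁻¹) * ‖x t - Z t (kk t)‖ ^ 2 - ‖x t - U (kstar t)‖ ^ 2
          - ‖x t‖ ^ 2 - ‖U (kk t)‖ ^ 2)
        - (if kk t ≠ kstar t then β * (n t)⁻¹ else 0) ≤ Φ t - Φ (t + 1) := by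
    intro t ht
    have hn1 := hn t ht
    have hη : 0 ≤ (n t)⁻¹ := inv_nonneg.2 (by linarith)
    obtain ⟨hu1, hu2⟩ := hupd t ht
    have hdiff : Φ t - Φ (t + 1) =
        (n t)⁻¹ * ((1 - (n t)⁻¹) * ‖x t - Z t (kk t)‖ ^ 2
          - ‖x t - U (kk t)‖ ^ 2 + ‖Z t (kk t) - U (kk t)‖ ^ 2) := by
      have hsum : Φ t - Φ (t + 1) =
          ∑ k : Fin K, (‖Z t k - U k‖ ^ 2 - ‖Z (t + 1) k - U k‖ ^ 2) := by
        simp only [hΦ, frobSq, ← Finset.sum_sub_distrib]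
      rw [hsum, Finset.sum_eq_single (kk t)
        (fun k _ hk => by rw [hu2 k hk]; ring)
        (fun h => absurd (Finset.mem_univ _) h)]
      rw [hu1, step_eq]
      ring
    rw [hdiff]
    by_cases hmk : kk t ≠ kstar t
    · rw [if_pos hmk]
      have hb := hβ t (Finset.mem_filter.2 ⟨ht, hmk⟩)
      nlinarith [mul_le_mul_of_nonneg_left hb hη,
        mul_nonneg hη (sq_nonneg ‖Z t (kk t) - U (kk t)‖),
        mul_nonneg hη (sq_nonneg ‖x t‖),
        mul_nonneg hη (sq_nonneg ‖U (kk t)‖)]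
    · rw [if_neg hmk]
      push_neg at hmk
      rw [hmk]
      nlinarith [mul_nonneg hη (sq_nonneg ‖Z t (kstar t) - U (kstar t)‖),
        mul_nonneg hη (sq_nonneg ‖x t‖),
        mul_nonneg hη (sq_nonneg ‖U (kstar t)‖)]
  have htel : ∑ t ∈ Icc 1 T, (Φ t - Φ (t + 1)) = Φ 1 - Φ (T + 1) := tele Φ T
  have hPhi_nonneg : ∀ t, 0 ≤ Φ t := fun t =>
    Finset.sum_nonneg fun k _ => sq_nonneg _
  have hβsum : β * ∑ t ∈ (Icc 1 T).filter (fun t => kk t ≠ kstar t), (n t)⁻¹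
      = ∑ t ∈ Icc 1 T, (if kk t ≠ kstar t then β * (n t)⁻¹ else 0) := by
    rw [Finset.mul_sum, Finset.sum_filter]
  rw [hβsum, ← Finset.sum_sub_distrib]
  calc ∑ t ∈ Icc 1 T, ((n t)⁻¹ *
        ((1 - (n t)⁻¹) * ‖x t - Z t (kk t)‖ ^ 2 - ‖x t - U (kstar t)‖ ^ 2
          - ‖x t‖ ^ 2 - ‖U (kk t)‖ ^ 2)
        - (if kk t ≠ kstar t then β * (n t)⁻¹ else 0))
      ≤ ∑ t ∈ Icc 1 T, (Φ t - Φ (t + 1)) := Finset.sum_le_sum hstep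
    _ = Φ 1 - Φ (T + 1) := htel
    _ ≤ Φ 1 := by linarith [hPhi_nonneg (T + 1)]
end

section
/- For all vectors x, z, u ∈ ℝ^d and every real n > 0, one has −2·⟨z − u, (x − z)/n⟩ − ∥(x − z)/n∥² ≥ (1/n)·((1 − 1/n)·∥x − z∥² − ∥x − u∥² − ∥x∥² − ∥u∥²). (This is the per-iteration lower bound on the progress Δ_t of the online codeword update in the matched case, where the data point is assigned to the codeword with the same index in the online codebook and in the comparison codebook.) -/
open scoped RealInnerProductSpace

theorem per_iteration_progress_matched (d : ℕ)
    (x z u : EuclideanSpace ℝ (Fin d)) (n : ℝ) (hn : 0 < n) :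
    -2 * ⟪z - u, n⁻¹ • (x - z)⟫ - ‖n⁻¹ • (x - z)‖ ^ 2
      ≥ n⁻¹ * ((1 - n⁻¹) * ‖x - z‖ ^ 2 - ‖x - u‖ ^ 2 - ‖x‖ ^ 2 - ‖u‖ ^ 2) := by
  have hxz : ‖x - z‖ ^ 2 = ‖x‖ ^ 2 - 2 * ⟪x, z⟫ + ‖z‖ ^ 2 := by
    rw [norm_sub_sq_real]
  have hxu : ‖x - u‖ ^ 2 = ‖x‖ ^ 2 - 2 * ⟪x, u⟫ + ‖u‖ ^ 2 := by
    rw [norm_sub_sq_real]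
  have hin : ⟪z - u, n⁻¹ • (x - z)⟫
      = n⁻¹ * (⟪z, x⟫ - ⟪z, z⟫ - ⟪u, x⟫ + ⟪u, z⟫) := by
    rw [inner_smul_right, inner_sub_left, inner_sub_right, inner_sub_right]; ring
  have hnorm : ‖n⁻¹ • (x - z)‖ ^ 2 = n⁻¹ ^ 2 * ‖x - z‖ ^ 2 := by
    rw [norm_smul]; simp [abs_of_pos (inv_pos.mpr hn), mul_pow]
  have hzz : ⟪z, z⟫ = ‖z‖ ^ 2 := real_inner_self_eq_norm_sq z
  have hs1 : ⟪z, x⟫ = ⟪x, z⟫ := real_inner_comm x z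
  have hs2 : ⟪u, x⟫ = ⟪x, u⟫ := real_inner_comm x u
  have hzu : (0:ℝ) ≤ ‖z - u‖ ^ 2 := sq_nonneg _
  have hzu' : ‖z - u‖ ^ 2 = ‖z‖ ^ 2 - 2 * ⟪z, u⟫ + ‖u‖ ^ 2 := by
    rw [norm_sub_sq_real]
  have huz : ⟪u, z⟫ = ⟪z, u⟫ := real_inner_comm z u
  rw [hin, hnorm, hxz, hxu, hzz, hs1, hs2, huz]
  have hninv : 0 < n⁻¹ := inv_pos.mpr hn
  nlinarith [hzu, hzu', sq_nonneg (n⁻¹), mul_pos hninv hninv,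
    mul_nonneg hninv.le hzu]
end

section
/- Let x, z, u, u* ∈ ℝ^d, let n > 0 be real, and let β ∈ ℝ satisfy ∥x − u∥² − ∥x − u*∥² ≤ β. Then −2·⟨z − u, (x − z)/n⟩ − ∥(x − z)/n∥² ≥ (1/n)·((1 − 1/n)·∥x − z∥² − ∥x − u*∥² − β − ∥x∥² − ∥u∥²). (This is the per-iteration lower bound on the progress Δ_t of the online codeword update in the mismatched case, where the data point x is assigned to the comparison codeword u paired with the updated online codeword, while its nearest comparison codeword is u*.) -/
open scoped RealInnerProductSpace

theorem per_iteration_progress_mismatched (d : ℕ)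
    (x z u ustar : EuclideanSpace ℝ (Fin d)) (n : ℝ) (hn : 0 < n)
    (β : ℝ) (hβ : ‖x - u‖ ^ 2 - ‖x - ustar‖ ^ 2 ≤ β) :
    -2 * ⟪z - u, n⁻¹ • (x - z)⟫ - ‖n⁻¹ • (x - z)‖ ^ 2
      ≥ n⁻¹ * ((1 - n⁻¹) * ‖x - z‖ ^ 2 - ‖x - ustar‖ ^ 2 - β
          - ‖x‖ ^ 2 - ‖u‖ ^ 2) := by
  have key : ‖(x - z) - (u - z)‖ ^ 2
      = ‖x - z‖ ^ 2 - 2 * ⟪x - z, u - z⟫ + ‖u - z‖ ^ 2 := norm_sub_sq_real _ _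
  have hxz : (x - z) - (u - z) = x - u := by abel
  rw [hxz] at key
  have hsym : ⟪z - u, n⁻¹ • (x - z)⟫ = n⁻¹ * ⟪z - u, x - z⟫ :=
    real_inner_smul_right _ _ _
  have hzu : ⟪z - u, x - z⟫ = -⟪x - z, u - z⟫ := by
    rw [real_inner_comm, show z - u = -(u - z) by abel, inner_neg_right]
  have hns : ‖n⁻¹ • (x - z)‖ ^ 2 = n⁻¹ ^ 2 * ‖x - z‖ ^ 2 := by
    rw [norm_smul, Real.norm_eq_abs, abs_of_pos (inv_pos.mpr hn)]; ring
  have h0 : (0:ℝ) ≤ ‖u - z‖ ^ 2 := sq_nonneg _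
  have h1 : (0:ℝ) ≤ ‖x‖ ^ 2 := sq_nonneg _
  have h2 : (0:ℝ) ≤ ‖u‖ ^ 2 := sq_nonneg _
  have hninv : 0 < n⁻¹ := inv_pos.mpr hn
  rw [hsym, hns, hzu]
  nlinarith [mul_le_mul_of_nonneg_left hβ hninv.le,
    mul_le_mul_of_nonneg_left h0 hninv.le,
    mul_le_mul_of_nonneg_left h1 hninv.le,
    mul_le_mul_of_nonneg_left h2 hninv.le, key]
end

section
/- Assume β ≥ 0, ∥x^t∥² ≤ R² for all t, and max_{1≤k≤K} ∥u_k∥² ≤ F², and assume ∥x^t − u_{k_t}∥² − ∥x^t − u_{k*_t}∥² ≤ β for every t ∈ T_n. Then Σ_{t=1}^T (1/n_t)·(1 − 1/n_t)·ℓ_Z^t − Σ_{t=1}^T ℓ_U^t ≤ ∥Z^1 − U∥_F² + β·Σ_{t∈T_n} (1/n_t) + T·(R² + F²) + 2. -/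
open Finset RealInnerProductSpace

lemma opq_step {d : ℕ} (x z u : EuclideanSpace ℝ (Fin d)) (η : ℝ) :
    ‖(z + η • (x - z)) - u‖ ^ 2
      = ‖z - u‖ ^ 2 + η * (‖x - u‖ ^ 2 - ‖x - z‖ ^ 2 - ‖z - u‖ ^ 2)
        + η ^ 2 * ‖x - z‖ ^ 2 := by
  have h2 : (z + η • (x - z)) - u = (z - u) + η • (x - z) := by abel
  have hxu : x - u = (x - z) + (z - u) := by abel
  rw [h2, hxu, norm_add_sq_real, norm_add_sq_real, real_inner_smul_right, norm_smul,
    real_inner_comm, mul_pow, Real.norm_eq_abs, sq_abs]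
  ring

lemma frobSq_nonneg {d K : ℕ} (A : Fin K → EuclideanSpace ℝ (Fin d)) : 0 ≤ frobSq A :=
  Finset.sum_nonneg fun _ _ => sq_nonneg _

theorem online_pq_weighted_loss_bound (d K T : ℕ) (hd : 1 ≤ d) (hK : 1 ≤ K) (hT : 1 ≤ T)
    (x : ℕ → EuclideanSpace ℝ (Fin d))
    (Z : ℕ → Fin K → EuclideanSpace ℝ (Fin d))
    (kk : ℕ → Fin K)
    (hnear : ∀ t ∈ Icc 1 T, ∀ j, ‖x t - Z t (kk t)‖ ≤ ‖x t - Z t j‖)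
    (n : ℕ → ℝ) (hn : ∀ t ∈ Icc 1 T, 1 ≤ n t)
    (hupd : ∀ t ∈ Icc 1 T,
      Z (t + 1) (kk t) = Z t (kk t) + (n t)⁻¹ • (x t - Z t (kk t)) ∧
      ∀ j, j ≠ kk t → Z (t + 1) j = Z t j)
    (U : Fin K → EuclideanSpace ℝ (Fin d))
    (kstar : ℕ → Fin K)
    (hstar : ∀ t ∈ Icc 1 T, ∀ j, ‖x t - U (kstar t)‖ ≤ ‖x t - U j‖)
    (β R F : ℝ) (hβ0 : 0 ≤ β) (hR0 : 0 ≤ R) (hF0 : 0 ≤ F)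
    (hβ : ∀ t ∈ (Icc 1 T).filter (fun t => kk t ≠ kstar t),
      ‖x t - U (kk t)‖ ^ 2 - ‖x t - U (kstar t)‖ ^ 2 ≤ β)
    (hR : ∀ t ∈ Icc 1 T, ‖x t‖ ^ 2 ≤ R ^ 2)
    (hF : ∀ k, ‖U k‖ ^ 2 ≤ F ^ 2) :
    ∑ t ∈ Icc 1 T, (n t)⁻¹ * (1 - (n t)⁻¹) * ‖x t - Z t (kk t)‖ ^ 2
      - ∑ t ∈ Icc 1 T, ‖x t - U (kstar t)‖ ^ 2
      ≤ frobSq (fun k => Z 1 k - U k)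
        + β * ∑ t ∈ (Icc 1 T).filter (fun t => kk t ≠ kstar t), (n t)⁻¹
        + (T : ℝ) * (R ^ 2 + F ^ 2) + 2 := by
  set g : ℕ → ℝ := fun t => frobSq (fun k => Z t k - U k) with hg
  -- per-step bound
  have key : ∀ t ∈ Icc 1 T,
      (n t)⁻¹ * (1 - (n t)⁻¹) * ‖x t - Z t (kk t)‖ ^ 2
        - ‖x t - U (kstar t)‖ ^ 2
        - (if kk t ≠ kstar t then β * (n t)⁻¹ else 0)
        ≤ g t - g (t + 1) := by
    intro t ht
    have hn1 := hn t ht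
    have hη0 : 0 < (n t)⁻¹ := inv_pos.mpr (lt_of_lt_of_le one_pos hn1)
    have hη1 : (n t)⁻¹ ≤ 1 := inv_le_one_of_one_le₀ hn1
    obtain ⟨h1, h2⟩ := hupd t ht
    -- frobenius difference only at column kk t
    have hdiff : g (t + 1) - g t
        = ‖Z (t + 1) (kk t) - U (kk t)‖ ^ 2 - ‖Z t (kk t) - U (kk t)‖ ^ 2 := by
      rw [hg]
      simp only [frobSq]
      rw [← Finset.sum_sub_distrib]
      rw [Finset.sum_eq_single (kk t)]
      · intro j _ hj
        rw [h2 j hj]; ring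
      · intro h; exact absurd (Finset.mem_univ _) h
    have hstep := opq_step (x t) (Z t (kk t)) (U (kk t)) (n t)⁻¹
    rw [← h1] at hstep
    -- bound on ‖x t - U (kk t)‖²
    have hb : (n t)⁻¹ * ‖x t - U (kk t)‖ ^ 2
        ≤ ‖x t - U (kstar t)‖ ^ 2 + (if kk t ≠ kstar t then β * (n t)⁻¹ else 0) := by
      by_cases hc : kk t = kstar t
      · simp [hc]
        calc (n t)⁻¹ * ‖x t - U (kstar t)‖ ^ 2 ≤ 1 * ‖x t - U (kstar t)‖ ^ 2 := by
              apply mul_le_mul_of_nonneg_right hη1 (sq_nonneg _)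
          _ = ‖x t - U (kstar t)‖ ^ 2 := one_mul _
      · simp only [if_pos hc]
        have := hβ t (Finset.mem_filter.mpr ⟨ht, hc⟩)
        nlinarith [sq_nonneg ‖x t - U (kstar t)‖]
    nlinarith [sq_nonneg ‖Z t (kk t) - U (kk t)‖, sq_nonneg ‖x t - Z t (kk t)‖]
  -- sum up
  have hsum : ∑ t ∈ Icc 1 T,
      ((n t)⁻¹ * (1 - (n t)⁻¹) * ‖x t - Z t (kk t)‖ ^ 2
        - ‖x t - U (kstar t)‖ ^ 2
        - (if kk t ≠ kstar t then β * (n t)⁻¹ else 0))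
      ≤ ∑ t ∈ Icc 1 T, (g t - g (t + 1)) := Finset.sum_le_sum key
  have htel : ∀ m : ℕ, ∑ t ∈ Icc 1 m, (g t - g (t + 1)) = g 1 - g (m + 1) := by
    intro m
    induction m with
    | zero => simp
    | succ m ih =>
      rw [Finset.sum_Icc_succ_top (Nat.le_add_left 1 m), ih]
      ring
  have htel := htel T
  have hfilt : ∑ t ∈ Icc 1 T, (if kk t ≠ kstar t then β * (n t)⁻¹ else 0)
      = β * ∑ t ∈ (Icc 1 T).filter (fun t => kk t ≠ kstar t), (n t)⁻¹ := by
    rw [Finset.mul_sum, Finset.sum_filter]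
  rw [Finset.sum_sub_distrib, Finset.sum_sub_distrib, htel, hfilt] at hsum
  have hg1 : 0 ≤ g (T + 1) := frobSq_nonneg _
  have hextra : 0 ≤ (T : ℝ) * (R ^ 2 + F ^ 2) + 2 := by positivity
  linarith
end
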